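/- arXiv:1803.00616 — 5 statements merged into one kernel-verified Lean document; each statement's English description precedes it below -/
import Mathlib

section
/- Let q be an odd prime dividing p−1 for a prime p. Then gcd((p^q−1)/(p−1), p−1) = q. -/
lemma geom_aux (p : ℕ) (hp2 : 2 ≤ p) (n : ℕ) :
    (p - 1) * (∑ i ∈ Finset.range n, p ^ i) = p ^ n - 1 := by
  induction n with
  | zero => simp
  | succ m ih =>
    rw [Finset.sum_range_succ, Nat.mul_add, ih, pow_succ]
    have h1 : 1 ≤ p ^ m := Nat.one_le_pow _ _ (by omega)
    have h2 : (p - 1) * p ^ m = p ^ m * p - p ^ m := by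
      rw [Nat.sub_mul, one_mul, mul_comm]
    rw [h2]
    have h3 : p ^ m ≤ p ^ m * p := Nat.le_mul_of_pos_right _ (by omega)
    omega

lemma sum_mod_aux (p : ℕ) (hp2 : 2 ≤ p) (n : ℕ) :
    (∑ i ∈ Finset.range n, p ^ i) ≡ n [MOD p - 1] := by
  induction n with
  | zero => simp [Nat.ModEq.refl]
  | succ m ih =>
    rw [Finset.sum_range_succ]
    have hpow : p ^ m ≡ 1 [MOD p - 1] := by
      have : (1 : ℕ) ≡ p [MOD p - 1] :=
        (Nat.modEq_iff_dvd' (by omega)).mpr dvd_rfl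
      simpa using (this.symm.pow m)
    calc (∑ i ∈ Finset.range m, p ^ i) + p ^ m
        ≡ m + 1 [MOD p - 1] := ih.add hpow
      _ = m + 1 := rfl

/-- Let `q` be an odd prime dividing `p - 1` for a prime `p`.
Then `gcd ((p^q - 1)/(p - 1), p - 1) = q`. -/
theorem gcd_geom_sum_eq (p q : ℕ) (hp : p.Prime) (hq : q.Prime) (hq_odd : Odd q)
    (hdvd : q ∣ p - 1) :
    Nat.gcd ((p ^ q - 1) / (p - 1)) (p - 1) = q := by
  have hp2 : 2 ≤ p := hp.two_le
  have hdiv : (p ^ q - 1) / (p - 1) = ∑ i ∈ Finset.range q, p ^ i := by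
    rw [← geom_aux p hp2 q, Nat.mul_div_cancel_left _ (by omega)]
  rw [hdiv, Nat.ModEq.gcd_eq (sum_mod_aux p hp2 q)]
  exact Nat.gcd_eq_left hdvd
end

section
/- If q divides p−1 and λ is a generator of the Sylow q-subgroup of F^× where |F| = p^q, then λ^{(p^q−1)/(p−1)} ≠ 1 and has order (p−1)_q, the q-part of p−1. -/
/-! Lifting the exponent gives `v_q(p^q - 1) = v_q(p - 1) + 1`, so `m = (p^q - 1)/(p - 1)` has
`q`-adic valuation exactly `1`. Raising an element of order `q^(v+1)` to a power of valuation `1`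
leaves an element of order `q^v`, and `v ≥ 1` since `q ∣ p - 1`. -/

theorem orderOf_pow_eq_prime_pow_sub_padicValNat {G : Type*} [Monoid G] {x : G} {q k m : ℕ}
    (hq : q.Prime) (hx : orderOf x = q ^ k) (hm : m ≠ 0) (hle : padicValNat q m ≤ k) :
    orderOf (x ^ m) = q ^ (k - padicValNat q m) := by
  have : Fact q.Prime := ⟨hq⟩
  obtain ⟨j, r, hr, rfl⟩ := Nat.exists_eq_pow_mul_and_not_dvd hm q hq.ne_one
  have hval : padicValNat q (q ^ j * r) = j := by
    rw [padicValNat.mul (pow_ne_zero j hq.ne_zero) (by rintro rfl; simp at hr),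
      padicValNat.prime_pow, padicValNat.eq_zero_of_not_dvd hr, add_zero]
  rw [hval] at hle ⊢
  have hxj : orderOf (x ^ q ^ j) = q ^ (k - j) := by
    rw [orderOf_pow_of_dvd (pow_ne_zero j hq.ne_zero) (hx ▸ Nat.pow_dvd_pow q hle), hx,
      Nat.pow_div hle hq.pos]
  rw [pow_mul, Nat.Coprime.orderOf_pow (hxj ▸ ((hq.coprime_iff_not_dvd.2 hr).pow_left _)), hxj]

section LiftingTheExponent

variable {q x : ℕ} [hq : Fact q.Prime] (hq_odd : Odd q) (hx : 1 < x) (hqx : q ∣ x - 1)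
include hq_odd hx hqx

theorem padicValNat_pow_sub_one {n : ℕ} (hn : n ≠ 0) :
    padicValNat q (x ^ n - 1) = padicValNat q (x - 1) + padicValNat q n := by
  have hqx' : ¬q ∣ x := fun h ↦ hq.out.one_lt.ne' <| Nat.dvd_one.1 <| by
    simpa [Nat.sub_sub_self hx.le] using Nat.dvd_sub h hqx
  simpa using padicValNat.pow_sub_pow (y := 1) hq_odd hx (by simpa using hqx) hqx' hn

theorem padicValNat_geom_sum_eq {n : ℕ} (hn : n ≠ 0) :
    padicValNat q ((x ^ n - 1) / (x - 1)) = padicValNat q n := by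
  rw [padicValNat.div_of_dvd (by simpa using Nat.sub_dvd_pow_sub_pow x 1 n),
    padicValNat_pow_sub_one hq_odd hx hqx hn, Nat.add_sub_cancel_left]

end LiftingTheExponent

theorem pow_geom_sum_order_general (p q : ℕ) (hp : p.Prime) (hq : q.Prime) (hq_odd : Odd q)
    (hdvd : q ∣ p - 1)
    (F : Type*) [Field F] (lam : Fˣ) (hlam : orderOf lam = q ^ ((p ^ q - 1).factorization q)) :
    lam ^ ((p ^ q - 1) / (p - 1)) ≠ 1 ∧
      orderOf (lam ^ ((p ^ q - 1) / (p - 1))) = q ^ ((p - 1).factorization q) := by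
  have : Fact q.Prime := ⟨hq⟩
  rw [Nat.factorization_def _ hq] at hlam ⊢
  have hval_pow := padicValNat_pow_sub_one hq_odd hp.one_lt hdvd hq.ne_zero
  have hval_geom := padicValNat_geom_sum_eq hq_odd hp.one_lt hdvd hq.ne_zero
  rw [padicValNat.self hq.one_lt] at hval_pow hval_geom
  have hgeom_ne : (p ^ q - 1) / (p - 1) ≠ 0 := fun h ↦ by simp [h] at hval_geom
  have horder : orderOf (lam ^ ((p ^ q - 1) / (p - 1))) = q ^ padicValNat q (p - 1) := by
    have := orderOf_pow_eq_prime_pow_sub_padicValNat hq (hval_pow ▸ hlam) hgeom_ne (by omega)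
    rwa [hval_geom, Nat.add_sub_cancel] at this
  have hv : 0 < padicValNat q (p - 1) :=
    one_le_padicValNat_of_dvd (Nat.sub_ne_zero_of_lt hp.one_lt) hdvd
  refine ⟨fun h ↦ ?_, horder⟩
  rw [h, orderOf_one] at horder
  exact (Nat.one_lt_pow hv.ne' hq.one_lt).ne horder

/-- If `q` divides `p - 1` and `λ` is a generator of the Sylow `q`-subgroup of `Fˣ`
where `|F| = p^q`, then `λ^((p^q-1)/(p-1)) ≠ 1` and has order `(p-1)_q`, the
`q`-part of `p - 1`. -/
theorem pow_geom_sum_order (p q : ℕ) (hp : p.Prime) (hq : q.Prime) (hq_odd : Odd q)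
    (hdvd : q ∣ p - 1)
    (F : Type*) [Field F] [Fintype F] (hF : Fintype.card F = p ^ q)
    (lam : Fˣ) (hlam : orderOf lam = q ^ ((p ^ q - 1).factorization q)) :
    lam ^ ((p ^ q - 1) / (p - 1)) ≠ 1 ∧
      orderOf (lam ^ ((p ^ q - 1) / (p - 1))) = q ^ ((p - 1).factorization q) :=
  pow_geom_sum_order_general p q hp hq hq_odd hdvd F lam hlam
end

section
/- Let P be the Heisenberg group over a finite field F of characteristic p, and let λ ∈ F^× have odd order. Then the automorphism (a,b,c) ↦ (λa, λb, λ²c) of P is fixed-point-free on nonidentity elements (i.e., the cyclic group ⟨λ⟩ acts Frobeniusly on P) whenever λ ≠ 1. -/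
variable (F : Type*) [Field F]

/-- The Heisenberg group over `F`: triples `(a, b, c)` corresponding to the
upper unitriangular matrix `[[1,a,c],[0,1,b],[0,0,1]]`. -/
def Heisenberg := F × F × F

namespace Heisenberg

variable {F}

instance : Mul (Heisenberg F) := ⟨fun x y => (x.1 + y.1, x.2.1 + y.2.1, x.2.2 + y.2.2 + x.1 * y.2.1)⟩
instance : One (Heisenberg F) := ⟨((0 : F), (0 : F), (0 : F))⟩
instance : Inv (Heisenberg F) := ⟨fun x => (-x.1, -x.2.1, -x.2.2 + x.1 * x.2.1)⟩

lemma mul_def (x y : Heisenberg F) :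
    x * y = (x.1 + y.1, x.2.1 + y.2.1, x.2.2 + y.2.2 + x.1 * y.2.1) := rfl
lemma one_def : (1 : Heisenberg F) = ((0 : F), (0 : F), (0 : F)) := rfl
lemma inv_def (x : Heisenberg F) : x⁻¹ = (-x.1, -x.2.1, -x.2.2 + x.1 * x.2.1) := rfl

instance : Group (Heisenberg F) :=
  Group.ofLeftAxioms
    (fun x y z => by
      simp only [mul_def]
      show ((x.1 + y.1) + z.1, (x.2.1 + y.2.1) + z.2.1,
          (x.2.2 + y.2.2 + x.1 * y.2.1) + z.2.2 + (x.1 + y.1) * z.2.1) =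
        (x.1 + (y.1 + z.1), x.2.1 + (y.2.1 + z.2.1),
          x.2.2 + (y.2.2 + z.2.2 + y.1 * z.2.1) + x.1 * (y.2.1 + z.2.1))
      refine Prod.ext ?_ (Prod.ext ?_ ?_) <;> simp <;> ring)
    (fun x => by
      simp only [mul_def, one_def]
      show ((0 : F) + x.1, (0 : F) + x.2.1, (0 : F) + x.2.2 + 0 * x.2.1) = (x.1, x.2.1, x.2.2)
      refine Prod.ext ?_ (Prod.ext ?_ ?_) <;> simp)
    (fun x => by
      simp only [mul_def, one_def, inv_def]
      show (-x.1 + x.1, -x.2.1 + x.2.1, (-x.2.2 + x.1 * x.2.1) + x.2.2 + -x.1 * x.2.1) =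
        ((0 : F), (0 : F), (0 : F))
      refine Prod.ext ?_ (Prod.ext ?_ ?_) <;> simp <;> ring_nf)

end Heisenberg

theorem pow_two_ne_one_of_odd_orderOf {G : Type*} [Monoid G] {g : G}
    (hodd : Odd (orderOf g)) (hg : g ≠ 1) : g ^ 2 ≠ 1 := fun h =>
  hg <| orderOf_eq_one_iff.mp <| hodd.coprime_two_right.eq_one_of_dvd (orderOf_dvd_of_pow_eq_one h)

namespace Heisenberg

variable {F}

theorem eq_one_of_diagonal_scaling_eq_self {α β γ : F} (hα : α ≠ 1) (hβ : β ≠ 1) (hγ : γ ≠ 1)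
    {x : Heisenberg F} (hx : ((α * x.1, β * x.2.1, γ * x.2.2) : Heisenberg F) = x) : x = 1 := by
  obtain ⟨a, b, c⟩ := x
  obtain ⟨ha, hb, hc⟩ : α * a = a ∧ β * b = b ∧ γ * c = c := by
    simpa only [Prod.mk.injEq] using hx
  rw [mul_left_eq_self₀] at ha hb hc
  exact Prod.ext (ha.resolve_left hα) (Prod.ext (hb.resolve_left hβ) (hc.resolve_left hγ))

end Heisenberg

theorem heisenberg_frobenius_action (lam : Fˣ) (hodd : Odd (orderOf lam)) :
    ∀ mu : Fˣ, mu ∈ Subgroup.zpowers lam → mu ≠ 1 →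
      ∀ x : Heisenberg F,
        (((mu * x.1, mu * x.2.1, mu ^ 2 * x.2.2)) : Heisenberg F) = x → x = 1 := by
  intro mu hmu hmu1 x hx
  have hmu_odd : Odd (orderOf mu) := hodd.of_dvd_nat (orderOf_dvd_of_mem_zpowers hmu)
  have hmu_sq : mu ^ 2 ≠ 1 := pow_two_ne_one_of_odd_orderOf hmu_odd hmu1
  exact Heisenberg.eq_one_of_diagonal_scaling_eq_self (Units.val_eq_one.not.mpr hmu1)
    (Units.val_eq_one.not.mpr hmu1) (Units.val_eq_one.not.mpr hmu_sq) hx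
end

section
/- Let a nontrivial finite group K act Frobeniusly (fixed-point-freely) by automorphisms on a finite group P. Then [P, K] = P. -/
/-- Let a nontrivial finite group `K` act Frobeniusly (fixed-point-freely) by
automorphisms on a finite group `P`.  Then `[P, K] = P`, i.e. the subgroup of `P`
generated by the elements `g⁻¹ · (g^k)` for `g ∈ P`, `k ∈ K` is all of `P`. -/
theorem commutator_of_frobenius_action (P K : Type*) [Group P] [Group K]
    [Finite P] [Finite K] [Nontrivial K] (φ : K →* MulAut P)
    (hFrob : ∀ k : K, k ≠ 1 → ∀ x : P, φ k x = x → x = 1) :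
    Subgroup.closure {x : P | ∃ g : P, ∃ k : K, x = g⁻¹ * φ k g} = ⊤ := by
  obtain ⟨k, hk⟩ := exists_ne (1 : K)
  have hinj : Function.Injective (fun g : P => g⁻¹ * φ k g) := by
    intro a b hab
    simp only at hab
    have hfix : φ k (b * a⁻¹) = b * a⁻¹ := by
      have h2 : φ k b = b * a⁻¹ * φ k a := by rw [mul_assoc, hab]; group
      rw [map_mul, map_inv, h2]; group
    have h1 := hFrob k hk _ hfix
    have : b = a := by
      have := mul_inv_eq_one.mp h1
      exact this
    exact this.symm
  have hsurj := Finite.injective_iff_surjective.mp hinj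
  rw [eq_top_iff]
  intro x _
  obtain ⟨g, hg⟩ := hsurj x
  exact Subgroup.subset_closure ⟨g, k, hg.symm⟩
end

section
/- Let F be a field of order p^q with q an odd prime dividing p−1, let γ ∈ F^× have order ((p^q−1)/(p−1))_{q'} (the q'-part), λ a generator of the Sylow q-subgroup of F^×, and σ the Frobenius automorphism. Then the subgroup H = ⟨γ, λσ⟩ of F^× ⋊ Gal(F/F_p) is nonabelian and has a normal abelian subgroup of index q; consequently every irreducible complex character of H has degree 1 or q, i.e., cd(H) = {1, q}. -/
/-!
Write `Γ = (γ, 1)` and `Λ = (λ, σ)`. Conjugation by `Λ` acts on `Fˣ` as the Frobenius, so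
`Λ Γ Λ⁻¹ = Γ ^ p`, and `Λ ^ q ∈ Fˣ` commutes with `Γ`. The intersection of `H` with `Fˣ` is
abelian and normal, with quotient the image `⟨σ⟩` of `H` in the Galois group, of order `q`. By
lifting the exponent, `q` divides `(p ^ q - 1) / (p - 1)` exactly once, so `γ` has order at least
`p`; hence `γ ^ p ≠ γ` and `Γ`, `Λ` do not commute.

For an irreducible representation, pick a common eigenvector `v` of `Γ` and `Λ ^ q`, with
`Γ v = μ v`. The vectors `Λ⁻ⁱ v` (`i < q`) are eigenvectors of `Γ` with eigenvalues `μ ^ p ^ i`,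
and `Λ` permutes them cyclically up to a scalar, so they span the representation. Since
`μ ^ p ^ q = μ`, the minimal period of `μ` under `x ↦ x ^ p` divides `q`. If it is `1`, then `Γ`
acts as a scalar and any eigenvector of `Λ` spans the representation; if it is `q`, the `Λ⁻ⁱ v`
have distinct eigenvalues, hence form a basis.
-/

open CategoryTheory Module

theorem padicValNat_pow_sub_one_div_sub_one {p q : ℕ} [Fact q.Prime] (hq_odd : Odd q)
    (hp : 1 < p) (hdvd : q ∣ p - 1) : padicValNat q ((p ^ q - 1) / (p - 1)) = 1 := by
  have hq_prime : q.Prime := Fact.out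
  have hndvd : ¬q ∣ p := fun h => hq_prime.not_dvd_one <| by
    simpa [Nat.sub_sub_self hp.le] using Nat.dvd_sub h hdvd
  have hlte := padicValNat.pow_sub_pow (x := p) (y := 1) hq_odd hp (by simpa using hdvd) hndvd
    hq_prime.ne_zero
  obtain ⟨N, hN⟩ : p - 1 ∣ p ^ q - 1 := by simpa using Nat.sub_dvd_pow_sub_pow p 1 q
  have hN0 : N ≠ 0 := by
    rintro rfl
    have := Nat.one_lt_pow hq_prime.ne_zero hp
    omega
  rw [one_pow, hN, padicValNat.mul (by omega) hN0, padicValNat_self] at hlte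
  rw [hN, Nat.mul_div_cancel_left _ (by omega)]
  omega

theorem le_ordCompl_pow_sub_one_div_sub_one {p q : ℕ} (hq : q.Prime) (hq_odd : Odd q)
    (hp : 1 < p) (hdvd : q ∣ p - 1) :
    p ≤ ((p ^ q - 1) / (p - 1)) / q ^ (((p ^ q - 1) / (p - 1)).factorization q) := by
  have : Fact q.Prime := ⟨hq⟩
  have hq3 : 3 ≤ q := by
    obtain ⟨r, hr⟩ := hq_odd
    have := hq.two_le
    omega
  rw [Nat.factorization_def _ hq, padicValNat_pow_sub_one_div_sub_one hq_odd hp hdvd, pow_one,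
    Nat.le_div_iff_mul_le hq.pos, ← Nat.geomSum_eq hp]
  calc p * q ≤ p ^ 2 := by
        rw [sq]
        exact Nat.mul_le_mul_left _ ((Nat.le_of_dvd (by omega) hdvd).trans (by omega))
    _ ≤ ∑ k ∈ Finset.range q, p ^ k :=
        Finset.single_le_sum (fun _ _ => Nat.zero_le _) (Finset.mem_range.mpr (by omega))

theorem pow_ne_self_of_le_orderOf {G : Type*} [Group G] {x : G} {n : ℕ} (hn : 1 < n)
    (h : n ≤ orderOf x) : x ^ n ≠ x := by
  intro hx
  refine pow_ne_one_of_lt_orderOf (x := x) (Nat.sub_ne_zero_of_lt hn) (by omega)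
    (mul_eq_right (b := x).mp ?_)
  rwa [← pow_succ, Nat.sub_add_cancel hn.le]

theorem SemiconjBy.pow_left_pow {M : Type*} [Monoid M] {h a : M} {p : ℕ}
    (hconj : SemiconjBy h a (a ^ p)) (i : ℕ) : SemiconjBy (h ^ i) a (a ^ p ^ i) := by
  induction i with
  | zero => simp
  | succ i ih =>
    rw [pow_succ' h, pow_succ' p, pow_mul]
    exact (hconj.pow_right _).mul_left ih

theorem Subgroup.closure_pair_subtype_eq_top {G : Type*} [Group G] (x y : G) :
    closure {⟨x, subset_closure (Set.mem_insert x {y})⟩,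
      ⟨y, subset_closure (Set.mem_insert_of_mem x rfl)⟩} = (⊤ : Subgroup (closure {x, y})) := by
  rw [← closure_closure_coe_preimage]
  congr 1
  ext ⟨z, hz⟩
  simp

namespace SemidirectProduct

variable {N G : Type*} [CommGroup N] [Group G] {φ : G →* MulAut N}

theorem semiconjBy_mk_inl (m n : N) (g : G) :
    SemiconjBy (⟨m, g⟩ : N ⋊[φ] G) (inl n) (inl (φ g n)) := by
  ext <;> simp [mul_comm]

theorem commute_inl_mk_iff {n m : N} {g : G} :
    Commute (inl n) (⟨m, g⟩ : N ⋊[φ] G) ↔ φ g n = n := by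
  rw [Commute, SemiconjBy, (semiconjBy_mk_inl m n g).eq, mul_left_inj, inl_injective.eq_iff,
    eq_comm]

theorem commute_of_rightHom_eq_one {x y : N ⋊[φ] G} (hx : rightHom x = 1)
    (hy : rightHom y = 1) : Commute x y := by
  rw [rightHom_eq_right] at hx hy
  ext <;> simp [hx, hy, mul_comm]

theorem map_rightHom_closure_inl_mk (n m : N) (g : G) :
    (Subgroup.closure {inl n, ⟨m, g⟩}).map (rightHom (φ := φ)) = Subgroup.zpowers g := by
  rw [MonoidHom.map_closure, Set.image_pair, rightHom_inl, Subgroup.zpowers_eq_closure]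
  simp

theorem exists_normal_commute_index_eq (H : Subgroup (N ⋊[φ] G)) :
    ∃ A : Subgroup H, A.Normal ∧ (∀ a b : A, a * b = b * a) ∧
      A.index = Nat.card (H.map rightHom) := by
  refine ⟨(rightHom.comp H.subtype).ker, MonoidHom.normal_ker _, fun a b => ?_, ?_⟩
  · exact Subtype.ext <| Subtype.ext <| commute_of_rightHom_eq_one a.2 b.2
  · rw [Subgroup.index_ker, MonoidHom.range_comp, Subgroup.range_subtype]

end SemidirectProduct

theorem orderOf_algEquiv_eq_of_apply_eq_pow {p q : ℕ} [Fact p.Prime] {F : Type*} [Field F]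
    [Fintype F] [Algebra (ZMod p) F] (hF : Fintype.card F = p ^ q) {σ : F ≃ₐ[ZMod p] F}
    (hσ : ∀ x, σ x = x ^ p) : orderOf σ = q := by
  have hfrob : σ = FiniteField.frobeniusAlgEquivOfAlgebraic (ZMod p) F :=
    AlgEquiv.ext fun x => by simp [hσ]
  rw [hfrob, FiniteField.orderOf_frobeniusAlgEquivOfAlgebraic]
  rw [Module.card_eq_pow_finrank (K := ZMod p), ZMod.card] at hF
  exact Nat.pow_right_injective (Fact.out : p.Prime).two_le hF

theorem Module.End.exists_hasEigenvector_of_commute {K V : Type*} [Field K] [IsAlgClosed K]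
    [AddCommGroup V] [Module K V] [FiniteDimensional K V] [Nontrivial V] {f g : End K V}
    (hfg : Commute f g) : ∃ (v : V) (μ ν : K), f.HasEigenvector μ v ∧ g v = ν • v := by
  obtain ⟨μ, hμ⟩ := f.exists_eigenvalue
  have hmaps : Set.MapsTo g (f.eigenspace μ) (f.eigenspace μ) :=
    mapsTo_genEigenspace_of_comm hfg μ 1
  have : Nontrivial (f.eigenspace μ) := Submodule.nontrivial_iff_ne_bot.mpr hμ
  obtain ⟨ν, hν⟩ := Module.End.exists_eigenvalue (g.restrict hmaps)
  obtain ⟨⟨v, hv⟩, hvν, hv0⟩ := hν.exists_hasEigenvector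
  exact ⟨v, μ, ν, ⟨hv, fun h => hv0 (Subtype.ext h)⟩,
    congrArg Subtype.val (mem_eigenspace_iff.mp hvν)⟩

namespace Representation

variable {k G V : Type*} [Field k] [Group G] [AddCommGroup V] [Module k V]

theorem apply_mem_of_mem_closure [FiniteDimensional k V] (ρ : Representation k G V)
    {U : Submodule k V} {s : Set G} (hs : ∀ g ∈ s, ∀ v ∈ U, ρ g v ∈ U) {g : G}
    (hg : g ∈ Subgroup.closure s) : ∀ v ∈ U, ρ g v ∈ U := by
  induction hg using Subgroup.closure_induction with
  | mem g hg => exact hs g hg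
  | one => simp
  | mul g g' _ _ ih ih' => exact fun v hv => by simpa using ih _ (ih' v hv)
  | inv g _ ih =>
    -- `ρ g` maps `U` injectively into itself, hence onto it by finite-dimensionality.
    have hmap : U.map (ρ g) = U :=
      Submodule.eq_of_le_of_finrank_eq (Submodule.map_le_iff_le_comap.mpr ih)
        ((LinearEquiv.ofBijective _ (ρ.apply_bijective g)).finrank_map_eq U)
    intro v hv
    obtain ⟨u, hu, rfl⟩ := hmap.symm ▸ hv
    simpa using hu

theorem apply_inv_pow_of_semiconjBy (ρ : Representation k G V) {a h : G} {p : ℕ}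
    (hconj : SemiconjBy h a (a ^ p)) {μ : k} {v : V} (hv : End.HasEigenvector (ρ a) μ v)
    (i : ℕ) : ρ a (ρ (h ^ i)⁻¹ v) = μ ^ p ^ i • ρ (h ^ i)⁻¹ v := by
  have hconj_i : a * (h ^ i)⁻¹ = (h ^ i)⁻¹ * a ^ p ^ i :=
    (hconj.pow_left_pow i).inv_symm_left.symm
  rw [← End.mul_apply, ← map_mul, hconj_i, map_mul, map_pow, End.mul_apply, hv.pow_apply,
    map_smul]

end Representation

namespace FDRep

variable {k G : Type*} [Field k] [Group G]

theorem subrepresentation_eq_bot_or_eq_top (V : FDRep k G) [Simple V]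
    (W : Subrepresentation V.ρ) : W.toSubmodule = ⊥ ∨ W.toSubmodule = ⊤ := by
  refine or_iff_not_imp_left.mpr fun hW => ?_
  let ι : FDRep.of W.toRepresentation ⟶ V :=
    ⟨FGModuleCat.ofHom W.toSubmodule.subtype, fun g => by ext; rfl⟩
  have : Mono ι := ConcreteCategory.mono_of_injective ι Subtype.val_injective
  have hι : ι ≠ 0 := fun h => by
    obtain ⟨w, hw, hw0⟩ := Submodule.exists_mem_ne_zero_of_ne_bot hW
    exact hw0 (ConcreteCategory.congr_hom h (⟨w, hw⟩ : W.toSubmodule) :)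
  have : IsIso ι := isIso_of_mono_of_nonzero hι
  refine eq_top_iff.mpr fun v _ => ?_
  obtain ⟨w, rfl⟩ := (FDRep.isoToLinearEquiv (asIso ι)).surjective v
  exact w.2

theorem eq_top_of_apply_mem_of_closure_eq_top (V : FDRep k G) [Simple V] {s : Set G}
    (hs : Subgroup.closure s = ⊤) {U : Submodule k V} (hU : ∀ g ∈ s, ∀ v ∈ U, V.ρ g v ∈ U)
    (hU0 : U ≠ ⊥) : U = ⊤ :=
  (V.subrepresentation_eq_bot_or_eq_top ⟨U, fun g _ hv =>
    Representation.apply_mem_of_mem_closure V.ρ hU (hs ▸ Subgroup.mem_top g) _ hv⟩).resolve_left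
    hU0

theorem nontrivial_of_simple (V : FDRep k G) [Simple V] : Nontrivial V := by
  by_contra hV
  rw [not_nontrivial_iff_subsingleton] at hV
  exact id_nonzero V <| Action.hom_ext _ _ <| FGModuleCat.hom_ext <|
    LinearMap.ext fun _ => Subsingleton.elim _ _

variable {a h : G}

theorem span_range_inv_pow_eq_top {p q : ℕ} (hq : 0 < q) (hgen : Subgroup.closure {a, h} = ⊤)
    (hconj : SemiconjBy h a (a ^ p)) (V : FDRep k G) [Simple V] {v : V} {μ ν : k}
    (hv : End.HasEigenvector (V.ρ a) μ v) (hvν : V.ρ (h ^ q) v = ν • v) :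
    Submodule.span k (Set.range fun i : Fin q => V.ρ (h ^ (i : ℕ))⁻¹ v) = ⊤ := by
  set U := Submodule.span k (Set.range fun i : Fin q => V.ρ (h ^ (i : ℕ))⁻¹ v)
  have hmem : ∀ i < q, V.ρ (h ^ i)⁻¹ v ∈ U := fun i hi =>
    Submodule.subset_span ⟨⟨i, hi⟩, rfl⟩
  have hU0 : U ≠ ⊥ := fun hU => hv.2 (by simpa [hU] using hmem 0 hq)
  refine V.eq_top_of_apply_mem_of_closure_eq_top hgen ?_ hU0
  simp only [Set.mem_insert_iff, Set.mem_singleton_iff, forall_eq_or_imp, forall_eq]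
  refine ⟨fun x hx => ?_, fun x hx => ?_⟩ <;>
    refine (Submodule.map_span_le _ _ U).mpr ?_ (Submodule.mem_map_of_mem hx)
  · rintro - ⟨i, rfl⟩
    rw [Representation.apply_inv_pow_of_semiconjBy V.ρ hconj hv]
    exact Submodule.smul_mem _ _ (hmem i i.2)
  · rintro - ⟨⟨i, hi⟩, rfl⟩
    cases i with
    | zero =>
      have hcycle : h * (h ^ q)⁻¹ = (h ^ (q - 1))⁻¹ := by
        obtain ⟨r, rfl⟩ : ∃ r, q = r + 1 := ⟨q - 1, by omega⟩
        rw [Nat.add_sub_cancel, pow_succ, mul_inv_rev, mul_inv_cancel_left]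
      have hwrap : V.ρ h v = ν • V.ρ (h ^ (q - 1))⁻¹ v :=
        calc V.ρ h v = V.ρ (h * (h ^ q)⁻¹) (V.ρ (h ^ q) v) := by
              rw [← End.mul_apply, ← map_mul, inv_mul_cancel_right]
          _ = ν • V.ρ (h ^ (q - 1))⁻¹ v := by rw [hvν, map_smul, hcycle]
      simpa [hwrap] using Submodule.smul_mem U ν (hmem _ (by omega))
    | succ i =>
      have hshift : h * (h ^ (i + 1))⁻¹ = (h ^ i)⁻¹ := by group
      simpa [← End.mul_apply, ← map_mul, hshift] using hmem i (by omega)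

variable [IsAlgClosed k]

theorem finrank_eq_one_of_apply_eq_smul (hgen : Subgroup.closure {a, h} = ⊤) (V : FDRep k G)
    [Simple V] {μ : k} (ha : ∀ v, V.ρ a v = μ • v) : finrank k V = 1 := by
  have := V.nontrivial_of_simple
  obtain ⟨ν, hν⟩ := End.exists_eigenvalue (V.ρ h)
  obtain ⟨x, hx, hx0⟩ := hν.exists_hasEigenvector
  have hline : k ∙ x = ⊤ := by
    refine V.eq_top_of_apply_mem_of_closure_eq_top hgen ?_ (by simpa using hx0)
    rintro g (rfl | rfl) y hy
    · exact ha y ▸ Submodule.smul_mem _ _ hy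
    · obtain ⟨c, rfl⟩ := Submodule.mem_span_singleton.mp hy
      rw [map_smul, End.mem_eigenspace_iff.mp hx, smul_smul]
      exact Submodule.smul_mem _ _ (Submodule.mem_span_singleton_self x)
  rw [← finrank_top, ← hline, finrank_span_singleton hx0]

theorem finrank_eq_one_or_eq_of_semiconjBy {p q : ℕ} (hq : q.Prime)
    (hgen : Subgroup.closure {a, h} = ⊤) (hconj : SemiconjBy h a (a ^ p))
    (hcomm : Commute (h ^ q) a) (V : FDRep k G) [Simple V] :
    finrank k V = 1 ∨ finrank k V = q := by
  have := V.nontrivial_of_simple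
  obtain ⟨v, μ, ν, hv, hvν⟩ := End.exists_hasEigenvector_of_commute (hcomm.symm.map V.ρ)
  set w : Fin q → V := fun i => V.ρ (h ^ (i : ℕ))⁻¹ v
  have hspan : Submodule.span k (Set.range w) = ⊤ :=
    span_range_inv_pow_eq_top hq.pos hgen hconj V hv hvν
  have hw : ∀ i : Fin q, End.HasEigenvector (V.ρ a) ((· ^ p)^[i] μ) (w i) := fun i =>
    ⟨End.mem_eigenspace_iff.mpr <| by
      rw [pow_iterate]
      exact Representation.apply_inv_pow_of_semiconjBy V.ρ hconj hv i,
      fun hw0 => hv.2 ((map_eq_zero_iff _ (Representation.apply_bijective V.ρ _).1).mp hw0)⟩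
  have hperiod : Function.IsPeriodicPt (· ^ p) q μ := by
    have ha : a ^ p ^ q = a := mul_right_cancel ((hconj.pow_left_pow q).eq.symm.trans hcomm.eq)
    rw [Function.IsPeriodicPt, Function.IsFixedPt, pow_iterate]
    refine smul_left_injective k hv.2 (show μ ^ p ^ q • v = μ • v by
      rw [← hv.pow_apply, ← map_pow, ha, hv.apply_eq_smul])
  rcases (Nat.dvd_prime hq).mp hperiod.minimalPeriod_dvd with hfix | hmin
  · have hfix : (· ^ p) μ = μ := Function.minimalPeriod_eq_one_iff_isFixedPt.mp hfix
    have htop : ⊤ ≤ End.eigenspace (V.ρ a) μ := hspan ▸ Submodule.span_le.mpr <| by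
      rintro - ⟨i, rfl⟩
      exact Function.iterate_fixed hfix i ▸ (hw i).1
    exact Or.inl <| V.finrank_eq_one_of_apply_eq_smul hgen fun x =>
      End.mem_eigenspace_iff.mp (htop Submodule.mem_top)
  · have hinj : Function.Injective fun i : Fin q => (· ^ p)^[i] μ := fun i j hij =>
      Fin.ext (Function.iterate_injOn_Iio_minimalPeriod (by simp [hmin]) (by simp [hmin]) hij)
    refine Or.inr (le_antisymm ?_ ?_)
    · rw [← finrank_top, ← hspan]
      exact (finrank_range_le_card w).trans_eq (Fintype.card_fin q)
    · simpa using (End.eigenvectors_linearIndependent' (V.ρ a) _ hinj w hw).fintype_card_le_finrank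

end FDRep

theorem semilinear_subgroup_cd_general (p q : ℕ) [Fact p.Prime] (hq : q.Prime) (hq_odd : Odd q)
    (hdvd : q ∣ p - 1)
    (F : Type) [Field F] [Fintype F] [Algebra (ZMod p) F]
    (hF : Fintype.card F = p ^ q)
    (φ : (F ≃ₐ[ZMod p] F) →* MulAut Fˣ)
    (hφ : ∀ (g : F ≃ₐ[ZMod p] F) (u : Fˣ), ((φ g u : Fˣ) : F) = g u)
    (σ : F ≃ₐ[ZMod p] F) (hσ : ∀ x : F, σ x = x ^ p)
    (gam lam : Fˣ)
    (hgam : orderOf gam =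
      ((p ^ q - 1) / (p - 1)) / q ^ (((p ^ q - 1) / (p - 1)).factorization q)) :
    (∃ a b : (Subgroup.closure {(⟨gam, 1⟩ : Fˣ ⋊[φ] (F ≃ₐ[ZMod p] F)), ⟨lam, σ⟩} :
        Subgroup (Fˣ ⋊[φ] (F ≃ₐ[ZMod p] F))), a * b ≠ b * a) ∧
      (∃ A : Subgroup (Subgroup.closure {(⟨gam, 1⟩ : Fˣ ⋊[φ] (F ≃ₐ[ZMod p] F)), ⟨lam, σ⟩} :
          Subgroup (Fˣ ⋊[φ] (F ≃ₐ[ZMod p] F))),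
        A.Normal ∧ (∀ a b : A, a * b = b * a) ∧ A.index = q) ∧
      ∀ V : FDRep ℂ (Subgroup.closure {(⟨gam, 1⟩ : Fˣ ⋊[φ] (F ≃ₐ[ZMod p] F)), ⟨lam, σ⟩} :
          Subgroup (Fˣ ⋊[φ] (F ≃ₐ[ZMod p] F))),
        Simple V → Module.finrank ℂ V = 1 ∨ Module.finrank ℂ V = q := by
  have hp : 1 < p := (Fact.out : p.Prime).one_lt
  have hσ_order : orderOf σ = q := orderOf_algEquiv_eq_of_apply_eq_pow hF hσ
  have hfrob : φ σ gam = gam ^ p := Units.ext (by rw [hφ, hσ, Units.val_pow_eq_pow_val])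
  have hgam_p : gam ^ p ≠ gam := pow_ne_self_of_le_orderOf hp
    (hgam ▸ le_ordCompl_pow_sub_one_div_sub_one hq hq_odd hp hdvd)
  set H := Subgroup.closure {(⟨gam, 1⟩ : Fˣ ⋊[φ] (F ≃ₐ[ZMod p] F)), ⟨lam, σ⟩}
  set Γ : H := ⟨_, Subgroup.subset_closure (Set.mem_insert _ _)⟩
  set Λ : H := ⟨_, Subgroup.subset_closure (Set.mem_insert_of_mem _ rfl)⟩
  have hconj : SemiconjBy Λ Γ (Γ ^ p) := Subtype.ext <| by
    show _ * SemidirectProduct.inl gam = SemidirectProduct.inl gam ^ p * _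
    rw [← map_pow, ← hfrob]
    exact SemidirectProduct.semiconjBy_mk_inl lam gam σ
  have hcomm : Commute (Λ ^ q) Γ := by
    refine Subtype.ext <| SemidirectProduct.commute_of_rightHom_eq_one ?_ rfl
    show SemidirectProduct.rightHom ((⟨lam, σ⟩ : Fˣ ⋊[φ] (F ≃ₐ[ZMod p] F)) ^ q) = 1
    rw [map_pow, SemidirectProduct.rightHom_eq_right, ← hσ_order, pow_orderOf_eq_one]
  have hmap : H.map SemidirectProduct.rightHom = Subgroup.zpowers σ :=
    SemidirectProduct.map_rightHom_closure_inl_mk gam lam σ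
  obtain ⟨A, hA, hA_comm, hA_index⟩ := SemidirectProduct.exists_normal_commute_index_eq H
  refine ⟨⟨Γ, Λ, fun h => hgam_p ?_⟩, ⟨A, hA, hA_comm, ?_⟩, fun V _ =>
    FDRep.finrank_eq_one_or_eq_of_semiconjBy hq (Subgroup.closure_pair_subtype_eq_top _ _)
      hconj hcomm V⟩
  · rw [← hfrob]
    exact SemidirectProduct.commute_inl_mk_iff.mp (congrArg Subtype.val h)
  · rw [hA_index, hmap, Nat.card_zpowers, hσ_order]

/-- Let `F` be the field of order `p^q` with `q` an odd prime dividing `p - 1`, let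
`γ ∈ Fˣ` have order equal to the `q'`-part of `(p^q - 1)/(p - 1)`, let `λ` be a
generator of the Sylow `q`-subgroup of `Fˣ`, and let `σ` be the Frobenius
automorphism.  Then the subgroup `H = ⟨γ, λσ⟩` of `Fˣ ⋊ Gal(F/F_p)` is nonabelian
and has a normal abelian subgroup of index `q`; consequently every irreducible
complex character of `H` has degree `1` or `q`. -/
theorem semilinear_subgroup_cd (p q : ℕ) [Fact p.Prime] (hq : q.Prime) (hq_odd : Odd q)
    (hdvd : q ∣ p - 1)
    (F : Type) [Field F] [Fintype F] [Algebra (ZMod p) F]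
    (hF : Fintype.card F = p ^ q)
    (φ : (F ≃ₐ[ZMod p] F) →* MulAut Fˣ)
    (hφ : ∀ (g : F ≃ₐ[ZMod p] F) (u : Fˣ), ((φ g u : Fˣ) : F) = g u)
    (σ : F ≃ₐ[ZMod p] F) (hσ : ∀ x : F, σ x = x ^ p)
    (gam lam : Fˣ)
    (hgam : orderOf gam =
      ((p ^ q - 1) / (p - 1)) / q ^ (((p ^ q - 1) / (p - 1)).factorization q))
    (hlam : orderOf lam = q ^ ((p ^ q - 1).factorization q)) :
    (∃ a b : (Subgroup.closure {(⟨gam, 1⟩ : Fˣ ⋊[φ] (F ≃ₐ[ZMod p] F)), ⟨lam, σ⟩} :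
        Subgroup (Fˣ ⋊[φ] (F ≃ₐ[ZMod p] F))), a * b ≠ b * a) ∧
      (∃ A : Subgroup (Subgroup.closure {(⟨gam, 1⟩ : Fˣ ⋊[φ] (F ≃ₐ[ZMod p] F)), ⟨lam, σ⟩} :
          Subgroup (Fˣ ⋊[φ] (F ≃ₐ[ZMod p] F))),
        A.Normal ∧ (∀ a b : A, a * b = b * a) ∧ A.index = q) ∧
      ∀ V : FDRep ℂ (Subgroup.closure {(⟨gam, 1⟩ : Fˣ ⋊[φ] (F ≃ₐ[ZMod p] F)), ⟨lam, σ⟩} :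
          Subgroup (Fˣ ⋊[φ] (F ≃ₐ[ZMod p] F))),
        Simple V → Module.finrank ℂ V = 1 ∨ Module.finrank ℂ V = q :=
  semilinear_subgroup_cd_general p q hq hq_odd hdvd F hF φ hφ σ hσ gam lam hgam
end
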